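/- Define S3(x, y, z) := max( max( max(2x, y−x) + (y−x), z−y ) + (z−y), 1−z ) + (1−z) for 0 < x < y < z < 1. Then for all 0 < x1 < x2 < x3 < 1, max( S3(x1, x2, x3), S3(1−x3, 1−x2, 1−x1) ) ≥ 7/6, with equality at (x1, x2, x3) = (1/6, 1/2, 5/6). That is, with three repeater nodes, the minimum over repeater placements of the larger of the two directional unambiguous transmission times equals 7/6 in units of L/c, attained at positions L/6, L/2, 5L/6; this yields T(3) = 7L/(6c). -/
import Mathlib


/-- The three-repeater unambiguous transmission time from one end to the other. -/
noncomputable def S3 (x y z : ℝ) : ℝ :=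
  max (max (max (2 * x) (y - x) + (y - x)) (z - y) + (z - y)) (1 - z) + (1 - z)

lemma S3_lb1 (x y z : ℝ) : 1 + x ≤ S3 x y z := by
  unfold S3
  have h1 := le_max_left (2*x) (y-x)
  have h3 := le_max_left (max (2*x) (y-x) + (y-x)) (z-y)
  have h4 := le_max_left (max (max (2*x) (y-x) + (y-x)) (z-y) + (z-y)) (1-z)
  linarith

lemma S3_lb2 (x y z : ℝ) : 1 + y - 2*x ≤ S3 x y z := by
  unfold S3
  have h1 := le_max_right (2*x) (y-x)
  have h3 := le_max_left (max (2*x) (y-x) + (y-x)) (z-y)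
  have h4 := le_max_left (max (max (2*x) (y-x) + (y-x)) (z-y) + (z-y)) (1-z)
  linarith

/-- For all `0 < x1 < x2 < x3 < 1`, the larger of the two directional
transmission times `max (S3 x1 x2 x3) (S3 (1-x3) (1-x2) (1-x1))` is at least
`7/6`, with equality at `(x1, x2, x3) = (1/6, 1/2, 5/6)`. -/
theorem three_repeater_bidirectional :
    (∀ x1 x2 x3 : ℝ, 0 < x1 → x1 < x2 → x2 < x3 → x3 < 1 →
      7 / 6 ≤ max (S3 x1 x2 x3) (S3 (1 - x3) (1 - x2) (1 - x1))) ∧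
    max (S3 (1/6) (1/2) (5/6)) (S3 (1 - 5/6) (1 - 1/2) (1 - 1/6)) = 7 / 6 := by
  constructor
  · intro x1 x2 x3 _ _ _ _
    by_contra h
    push_neg at h
    have hF := lt_of_le_of_lt (le_max_left _ _) h
    have hB := lt_of_le_of_lt (le_max_right _ _) h
    have a1 := S3_lb1 x1 x2 x3
    have a2 := S3_lb2 x1 x2 x3
    have b1 := S3_lb1 (1 - x3) (1 - x2) (1 - x1)
    have b2 := S3_lb2 (1 - x3) (1 - x2) (1 - x1)
    linarith
  · have e1 : S3 (1/6) (1/2) (5/6) = 7/6 := by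
      unfold S3; norm_num
    have e2 : S3 (1 - 5/6) (1 - 1/2) (1 - 1/6) = 7/6 := by
      unfold S3; norm_num
    rw [e1, e2]; norm_num
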